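/- Characterization of termination: a closed λ-term t is weak-head normalizing (reduces in finitely many →wh steps to an abstraction) if and only if the judgment ⊢ t : ⋆ is derivable in the tree type system. -/

import Mathlib

/-! # Tree intersection types -/

mutual
/-- Linear types: `A ::= ⋆ | T → A`. -/
inductive LinTy : Type where
  | star : LinTy
  | arr : TreeTy → LinTy → LinTy
/-- Generic types: linear types or tree types. -/
inductive GenTy : Type where
  | lin : LinTy → GenTy
  | tree : TreeTy → GenTy
/-- Tree types: finite sequences of generic types. -/
inductive TreeTy : Type where
  | node : List GenTy → TreeTy
end

mutual
/-- Leaves of a generic type. -/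
def GenTy.leaves : GenTy → List LinTy
  | .lin A => [A]
  | .tree T => TreeTy.leaves T
  termination_by g => sizeOf g
/-- Leaves extraction on tree types. -/
def TreeTy.leaves : TreeTy → List LinTy
  | .node gs => gs.attach.flatMap (fun g => GenTy.leaves g.1)
  termination_by T => sizeOf T
  decreasing_by simp_wf; have := List.sizeOf_lt_of_mem g.2; omega
end

/-- Concatenation `⊎` of tree types (sequences). -/
def TreeTy.cat : TreeTy → TreeTy → TreeTy
  | .node a, .node b => .node (a ++ b)

mutual
/-- Weight (size) of a linear type, with parameter `X`. -/
def LinTy.weight (X : ℕ) : LinTy → ℕ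
  | .star => 0
  | .arr T A => max (TreeTy.weight X T) (LinTy.weight X A + 1)
  termination_by A => sizeOf A
def GenTy.weight (X : ℕ) : GenTy → ℕ
  | .lin A => LinTy.weight X A
  | .tree T => TreeTy.weight X T
  termination_by g => sizeOf g
def TreeTy.weight (X : ℕ) : TreeTy → ℕ
  | .node gs => X + (gs.attach.map (fun g => GenTy.weight X g.1)).foldr max 0
  termination_by T => sizeOf T
  decreasing_by simp_wf; have := List.sizeOf_lt_of_mem g.2; omega
end

mutual
/-- Hereditary absence of empty sequences (every leaf context ends in `⋆`). -/
inductive LinTy.Good : LinTy → Prop where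
  | star : LinTy.Good .star
  | arr {T A} : TreeTy.Good T → LinTy.Good A → LinTy.Good (.arr T A)
inductive GenTy.Good : GenTy → Prop where
  | lin {A} : LinTy.Good A → GenTy.Good (.lin A)
  | tree {T} : TreeTy.Good T → GenTy.Good (.tree T)
inductive TreeTy.Good : TreeTy → Prop where
  | node {gs : List GenTy} : gs ≠ [] → (∀ g ∈ gs, GenTy.Good g) → TreeTy.Good (.node gs)
end

/-! ## Leaf contexts -/

/-- One-hole contexts into tree types whose hole sits at a leaf position. -/
inductive LeafCtx : Type where
  | here (l r : List GenTy) : LeafCtx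
  | deeper (l : List GenTy) (L : LeafCtx) (r : List GenTy) : LeafCtx

/-- Plugging a linear type into a leaf context. -/
def LeafCtx.plug : LeafCtx → LinTy → TreeTy
  | .here l r, A => .node (l ++ .lin A :: r)
  | .deeper l L r, A => .node (l ++ .tree (L.plug A) :: r)

/-- Number of leaves strictly to the left of the hole. -/
def LeafCtx.holeIdx : LeafCtx → ℕ
  | .here l _ => (TreeTy.node l).leaves.length
  | .deeper l L _ => (TreeTy.node l).leaves.length + L.holeIdx

/-! ## Type contexts -/

mutual
/-- Linear type contexts: `𝕃c ::= ⟨·⟩ | T → 𝕃c | 𝕋 → A`. -/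
inductive LinCtx : Type where
  | hole : LinCtx
  | arrR : TreeTy → LinCtx → LinCtx
  | arrL : TreeCtx → LinTy → LinCtx
/-- Tree type contexts. -/
inductive TreeCtx : Type where
  | node : List GenTy → GenCtx → List GenTy → TreeCtx
/-- Generic type contexts. -/
inductive GenCtx : Type where
  | lin : LinCtx → GenCtx
  | tree : TreeCtx → GenCtx
end

mutual
def LinCtx.plug : LinCtx → LinTy → LinTy
  | .hole, B => B
  | .arrR T C, B => .arr T (C.plug B)
  | .arrL C A, B => .arr (C.plug B) A
def TreeCtx.plug : TreeCtx → LinTy → TreeTy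
  | .node l C r, B => .node (l ++ C.plug B :: r)
def GenCtx.plug : GenCtx → LinTy → GenTy
  | .lin C, B => .lin (C.plug B)
  | .tree C, B => .tree (C.plug B)
end

mutual
/-- Branch size of a linear type context. -/
def LinCtx.bsize (X : ℕ) : LinCtx → ℕ
  | .hole => 0
  | .arrR _ C => 1 + C.bsize X
  | .arrL C _ => C.bsize X
def TreeCtx.bsize (X : ℕ) : TreeCtx → ℕ
  | .node _ C _ => X + C.bsize X
def GenCtx.bsize (X : ℕ) : GenCtx → ℕ
  | .lin C => C.bsize X
  | .tree C => C.bsize X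
end

/-! # λ-terms (de Bruijn) and Closed Call-by-Name -/

inductive Term : Type where
  | var : ℕ → Term
  | lam : Term → Term
  | app : Term → Term → Term

/-- Shifting of free indices `≥ c` by `d`. -/
def Term.lift (d : ℕ) : ℕ → Term → Term
  | c, .var n => if n < c then .var n else .var (n + d)
  | c, .lam t => .lam (Term.lift d (c+1) t)
  | c, .app t u => .app (Term.lift d c t) (Term.lift d c u)

/-- Capture-avoiding substitution of `u` for index `k`. -/
def Term.subst (u : Term) : ℕ → Term → Term
  | k, .var n => if n = k then Term.lift k 0 u else if k < n then .var (n-1) else .var n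
  | k, .lam t => .lam (Term.subst u (k+1) t)
  | k, .app t s => .app (Term.subst u k t) (Term.subst u k s)

/-- `t{x₀ := u}`. -/
def Term.subst0 (t u : Term) : Term := Term.subst u 0 t

def Term.ClosedUnder : Term → ℕ → Prop
  | .var n, k => n < k
  | .lam t, k => t.ClosedUnder (k+1)
  | .app t u, k => t.ClosedUnder k ∧ u.ClosedUnder k

/-- Closed terms: no free variables. -/
def Term.Closed (t : Term) : Prop := t.ClosedUnder 0

/-- Occurrence of a free variable. -/
def Term.FreeIn : Term → ℕ → Prop
  | .var n, x => n = x
  | .lam t, x => t.FreeIn (x+1)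
  | .app t u, x => t.FreeIn x ∨ u.FreeIn x

/-- Weak head reduction `(λy.t)u r₁…r_h →wh t{y:=u} r₁…r_h`. -/
inductive Whr : Term → Term → Prop where
  | beta (t u : Term) : Whr (.app (.lam t) u) (t.subst0 u)
  | appL {t t' : Term} (u : Term) : Whr t t' → Whr (.app t u) (.app t' u)

/-- `n`-step weak head reduction. -/
inductive WhN : ℕ → Term → Term → Prop where
  | refl (t : Term) : WhN 0 t t
  | step {n t u v} : Whr t u → WhN n u v → WhN (n+1) t v

/-! # Type environments and the tree type system -/

/-- Type environments: maps from (de Bruijn) variables to tree types. -/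
def Env : Type := ℕ → TreeTy

def Env.empty : Env := fun _ => .node []

/-- Pointwise concatenation `Γ ⊎ Δ`. -/
def Env.union (Γ Δ : Env) : Env := fun x => (Γ x).cat (Δ x)

/-- Environment of the variable axiom: `x : [A]`. -/
def Env.single (x : ℕ) (A : LinTy) : Env :=
  fun y => if y = x then .node [.lin A] else .node []

/-- Environment extension `Γ, x₀:T` (de Bruijn cons). -/
def Env.cons (T : TreeTy) (Γ : Env) : Env
  | 0 => T
  | n+1 => Γ n

/-- Wrap a (non-empty) tree type in one extra sequence layer. -/
def TreeTy.wrap : TreeTy → TreeTy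
  | .node [] => .node []
  | T => .node [.tree T]

/-- `[Γ]`: wrap each (non-empty) type of the environment in one extra layer. -/
def Env.wrap (Γ : Env) : Env := fun x => (Γ x).wrap

/-- Finite union of environments. -/
def Env.unionF {n : ℕ} (Γs : Fin n → Env) : Env :=
  (List.ofFn Γs).foldr Env.union Env.empty

/-- Tree type derivations. -/
inductive Deriv : Env → Term → GenTy → Type where
  | var (x : ℕ) (A : LinTy) : Deriv (Env.single x A) (.var x) (.lin A)
  | lam {Γ : Env} {T : TreeTy} {t : Term} {A : LinTy} :
      Deriv (Env.cons T Γ) t (.lin A) → Deriv Γ (.lam t) (.lin (.arr T A))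
  | lamStar (t : Term) : Deriv Env.empty (.lam t) (.lin .star)
  | app {Γ Δ : Env} {t u : Term} {T : TreeTy} {A : LinTy} :
      Deriv Γ t (.lin (.arr T A)) → Deriv Δ u (.tree T) →
      Deriv (Env.union Γ Δ) (.app t u) (.lin A)
  | many {t : Term} (n : ℕ) (Γs : Fin n → Env) (Gs : Fin n → GenTy)
      (prems : ∀ i, Deriv (Γs i) t (Gs i)) :
      Deriv (Env.wrap (Env.unionF Γs)) t (.tree (.node (List.ofFn Gs)))
  | none (t : Term) : Deriv Env.empty t (.tree (.node []))

/-- Size of a derivation: number of rules that are not T-many/T-none. -/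
def Deriv.size : ∀ {Γ t G}, Deriv Γ t G → ℕ
  | _, _, _, .var _ _ => 1
  | _, _, _, .lam π => π.size + 1
  | _, _, _, .lamStar _ => 1
  | _, _, _, .app π ρ => π.size + ρ.size + 1
  | _, _, _, .many n _ _ prems => ∑ i : Fin n, (prems i).size
  | _, _, _, .none _ => 0

/-- Weight of a weighted derivation, with parameter `X`. -/
def Deriv.weight (X : ℕ) : ∀ {Γ t G}, Deriv Γ t G → ℕ
  | _, _, _, .var _ A => A.weight X
  | _, _, _, .lam (T := T) (A := A) π => max (π.weight X) (LinTy.weight X (.arr T A))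
  | _, _, _, .lamStar _ => 0
  | _, _, _, .app π ρ => max (π.weight X) (ρ.weight X)
  | _, _, _, .many n _ _ prems => X + (Finset.univ.sup fun i => (prems i).weight X)
  | _, _, _, .none _ => 0

/-- `SubD π n π'`: the judgment of `π'` occurs in `π`, crossing `n` T-many rules
descending from it to the root. -/
inductive SubD : ∀ {Γ t G}, Deriv Γ t G → ℕ → ∀ {Γ' u G'}, Deriv Γ' u G' → Prop where
  | refl {Γ t G} (π : Deriv Γ t G) : SubD π 0 π
  | lam {Γ T t A} {π : Deriv (Env.cons T Γ) t (.lin A)} {n} {Γ' u G'} {π' : Deriv Γ' u G'} :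
      SubD π n π' → SubD (Deriv.lam π) n π'
  | appL {Γ Δ t u T A} {π : Deriv Γ t (.lin (.arr T A))} {ρ : Deriv Δ u (.tree T)}
      {n} {Γ' v G'} {π' : Deriv Γ' v G'} :
      SubD π n π' → SubD (Deriv.app π ρ) n π'
  | appR {Γ Δ t u T A} {π : Deriv Γ t (.lin (.arr T A))} {ρ : Deriv Δ u (.tree T)}
      {n} {Γ' v G'} {π' : Deriv Γ' v G'} :
      SubD ρ n π' → SubD (Deriv.app π ρ) n π'
  | many {t k} {Γs : Fin k → Env} {Gs : Fin k → GenTy} {prems : ∀ i, Deriv (Γs i) t (Gs i)}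
      (i : Fin k) {n} {Γ' u G'} {π' : Deriv Γ' u G'} :
      SubD (prems i) n π' → SubD (Deriv.many k Γs Gs prems) (n+1) π'

/-! Soundness is quantitative subject reduction. Substituting a closed term `u` for a variable
typed by a tree type `T` consumes a derivation of `u : T`, whose size is the sum of the sizes of
its components, so contracting a redex removes its T-λ and T-@ rules and strictly decreases the
size of the derivation. Since a closed term is an abstraction or weak-head reduces, a derivation
of `t : ⋆` bounds the number of steps to an abstraction.

Completeness is subject expansion. In a derivation for `s{x := u}` each copy of `u` is typed
separately; anti-substitution gathers these types into the tree type of `x`, and the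
abstraction that ends the reduction is typed by T-λ⋆. -/

namespace Term

theorem ClosedUnder.mono {t : Term} {k l : ℕ} (h : t.ClosedUnder k) (hkl : k ≤ l) :
    t.ClosedUnder l := by
  induction t generalizing k l with
  | var n => exact Nat.lt_of_lt_of_le h hkl
  | lam t ih => exact ih h (Nat.succ_le_succ hkl)
  | app t u iht ihu => exact ⟨iht h.1 hkl, ihu h.2 hkl⟩

theorem lift_of_closedUnder (d : ℕ) {t : Term} {c : ℕ} (h : t.ClosedUnder c) :
    Term.lift d c t = t := by
  induction t generalizing c with
  | var n => exact if_pos h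
  | lam t ih => exact congrArg lam (ih h)
  | app t u iht ihu => exact congrArg₂ app (iht h.1) (ihu h.2)

theorem subst_var_self {u : Term} (hu : u.Closed) (k : ℕ) : Term.subst u k (var k) = u := by
  simp [Term.subst, lift_of_closedUnder _ hu]

theorem subst_var_of_ne (u : Term) {n k : ℕ} (h : n ≠ k) :
    Term.subst u k (var n) = var (if k < n then n - 1 else n) := by
  simp only [Term.subst, if_neg h]
  split_ifs <;> rfl

theorem closedUnder_subst {u : Term} (hu : u.Closed) {t : Term} {k : ℕ}
    (ht : t.ClosedUnder (k + 1)) : (Term.subst u k t).ClosedUnder k := by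
  induction t generalizing k with
  | var n =>
    obtain rfl | hn := eq_or_ne n k
    · rw [subst_var_self hu]
      exact hu.mono (Nat.zero_le n)
    · rw [subst_var_of_ne u hn]
      change n < k + 1 at ht
      change (if k < n then n - 1 else n) < k
      split_ifs <;> omega
  | lam t ih => exact ih ht
  | app t s iht ihs => exact ⟨iht ht.1, ihs ht.2⟩

theorem Closed.whr {t t' : Term} (ht : t.Closed) (h : Whr t t') : t'.Closed := by
  induction h with
  | beta s u => exact closedUnder_subst ht.2 ht.1
  | appL u _ ih => exact ⟨ih ht.1, ht.2⟩

theorem Closed.lam_or_whr {t : Term} (ht : t.Closed) : (∃ s, t = lam s) ∨ ∃ t', Whr t t' := by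
  induction t with
  | var n => exact absurd ht (Nat.not_lt_zero n)
  | lam s => exact .inl ⟨s, rfl⟩
  | app t u iht _ =>
    right
    obtain ⟨s, rfl⟩ | ⟨t', h⟩ := iht ht.1
    · exact ⟨_, .beta s u⟩
    · exact ⟨_, .appL u h⟩

end Term

namespace Env

def removeAt (k : ℕ) (Γ : Env) : Env := fun x => Γ (if x < k then x else x + 1)

theorem removeAt_single_self (k : ℕ) (A : LinTy) : removeAt k (single k A) = empty := by
  funext x
  simp only [removeAt, single]
  split_ifs <;> first | rfl | omega

theorem removeAt_single_of_ne {n k : ℕ} (A : LinTy) (h : n ≠ k) :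
    removeAt k (single n A) = single (if k < n then n - 1 else n) A := by
  funext x
  simp only [removeAt, single]
  split_ifs <;> first | rfl | omega

theorem removeAt_zero_cons (T : TreeTy) (Γ : Env) : removeAt 0 (cons T Γ) = Γ := rfl

theorem removeAt_succ_cons (k : ℕ) (T : TreeTy) (Γ : Env) :
    removeAt (k + 1) (cons T Γ) = cons T (removeAt k Γ) := by
  funext x
  cases x with
  | zero => rfl
  | succ x =>
    by_cases h : x < k <;> simp [removeAt, cons, h]

theorem removeAt_wrap (k : ℕ) (Γ : Env) : removeAt k (wrap Γ) = wrap (removeAt k Γ) := rfl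

theorem removeAt_union (k : ℕ) (Γ Δ : Env) :
    removeAt k (union Γ Δ) = union (removeAt k Γ) (removeAt k Δ) := rfl

theorem exists_eq_cons (Γ : Env) : ∃ T Δ, Γ = cons T Δ :=
  ⟨Γ 0, fun x => Γ (x + 1), funext fun x => by cases x <;> rfl⟩

theorem cons_inj {T T' : TreeTy} {Γ Γ' : Env} : cons T Γ = cons T' Γ' ↔ T = T' ∧ Γ = Γ' :=
  ⟨fun h => ⟨congrFun h 0, funext fun x => congrFun h (x + 1)⟩, fun ⟨hT, hΓ⟩ => hT ▸ hΓ ▸ rfl⟩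

theorem union_empty (Γ : Env) : union Γ empty = Γ := by
  funext x
  change (Γ x).cat (.node []) = Γ x
  cases Γ x
  simp [TreeTy.cat]

theorem unionF_succ {n : ℕ} (Γs : Fin (n + 1) → Env) :
    unionF Γs = union (Γs 0) (unionF fun i => Γs i.succ) := by
  simp [unionF, List.ofFn_succ]

theorem removeAt_unionF (k : ℕ) {n : ℕ} (Γs : Fin n → Env) :
    removeAt k (unionF Γs) = unionF fun i => removeAt k (Γs i) := by
  induction n with
  | zero => rfl
  | succ n ih => rw [unionF_succ, removeAt_union, ih, unionF_succ]

theorem unionF_apply_eq_nil {n : ℕ} {Γs : Fin n → Env} {x : ℕ}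
    (h : ∀ i, Γs i x = .node []) : unionF Γs x = .node [] := by
  induction n with
  | zero => rfl
  | succ n ih =>
    rw [unionF_succ]
    change (Γs 0 x).cat (unionF (fun i => Γs i.succ) x) = _
    rw [h 0, ih fun i => h i.succ]
    rfl

end Env

theorem Deriv.env_eq_nil {Γ : Env} {t : Term} {G : GenTy} (π : Deriv Γ t G) {k : ℕ}
    (ht : t.ClosedUnder k) {x : ℕ} (hx : k ≤ x) : Γ x = .node [] := by
  induction π generalizing k x with
  | var y A => exact if_neg (by change y < k at ht; omega)
  | lam _ ih => exact ih (x := x + 1) ht (Nat.succ_le_succ hx)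
  | lamStar | none => rfl
  | app _ _ ih₁ ih₂ =>
    change TreeTy.cat _ _ = _
    rw [ih₁ ht.1 hx, ih₂ ht.2 hx]
    rfl
  | many _ _ _ _ ih =>
    change TreeTy.wrap _ = _
    rw [Env.unionF_apply_eq_nil fun i => ih i ht hx]
    rfl

theorem Deriv.env_eq_empty {Γ : Env} {t : Term} {G : GenTy} (π : Deriv Γ t G)
    (ht : t.Closed) : Γ = Env.empty :=
  funext fun x => π.env_eq_nil ht (Nat.zero_le x)

theorem TreeTy.exists_eq_node_ofFn (T : TreeTy) :
    ∃ n, ∃ Gs : Fin n → GenTy, T = .node (List.ofFn Gs) :=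
  let ⟨gs⟩ := T
  ⟨_, gs.get, by rw [List.ofFn_get]⟩

def HasDerivLE (u : Term) (G : GenTy) (m : ℕ) : Prop :=
  ∃ π : Deriv Env.empty u G, π.size ≤ m

section HasDerivLE

variable {u : Term}

theorem HasDerivLE.mono {G : GenTy} {m m' : ℕ} (h : HasDerivLE u G m) (hm : m ≤ m') :
    HasDerivLE u G m' :=
  let ⟨π, hπ⟩ := h
  ⟨π, hπ.trans hm⟩

theorem Deriv.hasDerivLE {Γ : Env} {G : GenTy} (π : Deriv Γ u G) (hu : u.Closed) :
    HasDerivLE u G π.size := by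
  obtain rfl := π.env_eq_empty hu
  exact ⟨π, le_rfl⟩

theorem hasDerivLE_nil (u : Term) (m : ℕ) : HasDerivLE u (.tree (.node [])) m :=
  ⟨.none u, Nat.zero_le m⟩

theorem Deriv.exists_components {Γ : Env} {T : TreeTy} (π : Deriv Γ u (.tree T)) (hu : u.Closed) :
    ∃ (n : ℕ) (Gs : Fin n → GenTy) (ms : Fin n → ℕ), T = .node (List.ofFn Gs) ∧
      ∑ i, ms i ≤ π.size ∧ ∀ i, HasDerivLE u (Gs i) (ms i) := by
  cases π with
  | many n Γs Gs prems =>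
    exact ⟨n, Gs, fun i => (prems i).size, rfl, le_rfl, fun i => (prems i).hasDerivLE hu⟩
  | none => exact ⟨0, Fin.elim0, Fin.elim0, rfl, le_rfl, fun i => i.elim0⟩

theorem hasDerivLE_ofFn_iff (hu : u.Closed) {n : ℕ} (Gs : Fin n → GenTy) {m : ℕ} :
    HasDerivLE u (.tree (.node (List.ofFn Gs))) m ↔
      ∃ ms : Fin n → ℕ, ∑ i, ms i ≤ m ∧ ∀ i, HasDerivLE u (Gs i) (ms i) := by
  constructor
  · rintro ⟨π, hπ⟩
    obtain ⟨n', Gs', ms, hT, hms, h⟩ := π.exists_components hu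
    cases List.ofFn_inj'.mp (TreeTy.node.inj hT)
    exact ⟨ms, hms.trans hπ, h⟩
  · rintro ⟨ms, hms, h⟩
    choose prems hprems using h
    refine ((Deriv.many n (fun _ => Env.empty) Gs prems).hasDerivLE hu).mono ?_
    exact (Finset.sum_le_sum fun i _ => hprems i).trans hms

theorem hasDerivLE_singleton_iff (hu : u.Closed) {G : GenTy} {m : ℕ} :
    HasDerivLE u (.tree (.node [G])) m ↔ HasDerivLE u G m := by
  have : [G] = List.ofFn fun _ : Fin 1 => G := rfl
  rw [this, hasDerivLE_ofFn_iff hu]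
  simp only [Finset.univ_unique, Fin.default_eq_zero, Finset.sum_singleton]
  exact ⟨fun ⟨_, hm, h⟩ => (h 0).mono hm, fun h => ⟨fun _ => m, le_rfl, fun _ => h⟩⟩

theorem hasDerivLE_cat_iff (hu : u.Closed) {T₁ T₂ : TreeTy} {m : ℕ} :
    HasDerivLE u (.tree (T₁.cat T₂)) m ↔ ∃ m₁ m₂, m₁ + m₂ ≤ m ∧
      HasDerivLE u (.tree T₁) m₁ ∧ HasDerivLE u (.tree T₂) m₂ := by
  obtain ⟨p, Gs, rfl⟩ := T₁.exists_eq_node_ofFn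
  obtain ⟨q, Hs, rfl⟩ := T₂.exists_eq_node_ofFn
  change HasDerivLE u (.tree (.node (List.ofFn Gs ++ List.ofFn Hs))) m ↔ _
  simp only [← List.ofFn_fin_append, hasDerivLE_ofFn_iff hu]
  constructor
  · rintro ⟨ms, hms, h⟩
    refine ⟨∑ i, ms (Fin.castAdd q i), ∑ i, ms (Fin.natAdd p i), by rwa [← Fin.sum_univ_add],
      ⟨_, le_rfl, fun i => ?_⟩, ⟨_, le_rfl, fun i => ?_⟩⟩
    · simpa using h (Fin.castAdd q i)
    · simpa using h (Fin.natAdd p i)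
  · rintro ⟨m₁, m₂, hm, ⟨ms₁, hms₁, h₁⟩, ⟨ms₂, hms₂, h₂⟩⟩
    refine ⟨Fin.append ms₁ ms₂, ?_, Fin.addCases (fun i => ?_) (fun i => ?_)⟩
    · simp only [Fin.sum_univ_add, Fin.append_left, Fin.append_right]
      omega
    · simpa using h₁ i
    · simpa using h₂ i

theorem hasDerivLE_wrap_iff (hu : u.Closed) {T : TreeTy} {m : ℕ} :
    HasDerivLE u (.tree T.wrap) m ↔ HasDerivLE u (.tree T) m := by
  obtain ⟨_ | ⟨G, Gs⟩⟩ := T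
  · rfl
  · exact hasDerivLE_singleton_iff hu

theorem hasDerivLE_unionF_iff (hu : u.Closed) {n : ℕ} (Γs : Fin n → Env) (x : ℕ) {m : ℕ} :
    HasDerivLE u (.tree (Env.unionF Γs x)) m ↔
      ∃ ms : Fin n → ℕ, ∑ i, ms i ≤ m ∧ ∀ i, HasDerivLE u (.tree (Γs i x)) (ms i) := by
  induction n generalizing m with
  | zero => exact ⟨fun _ => ⟨Fin.elim0, by simp, fun i => i.elim0⟩, fun _ => hasDerivLE_nil u m⟩
  | succ n ih =>
    rw [Env.unionF_succ]
    change HasDerivLE u (.tree ((Γs 0 x).cat _)) m ↔ _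
    simp only [hasDerivLE_cat_iff hu, ih, Fin.sum_univ_succ, Fin.forall_fin_succ]
    constructor
    · rintro ⟨m₁, m₂, hm, h₀, ms, hms, h⟩
      exact ⟨Fin.cons m₁ ms, by simp only [Fin.cons_zero, Fin.cons_succ]; omega,
        by simpa using h₀, by simpa using h⟩
    · rintro ⟨ms, hms, h₀, h⟩
      exact ⟨ms 0, _, hms, h₀, _, le_rfl, h⟩

end HasDerivLE

theorem Deriv.subst {u : Term} (hu : u.Closed) {Γ : Env} {w : Term} {G : GenTy}
    (π : Deriv Γ w G) (k : ℕ) {m : ℕ} (hk : HasDerivLE u (.tree (Γ k)) m) :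
    ∃ π' : Deriv (Γ.removeAt k) (Term.subst u k w) G, π'.size ≤ π.size + m := by
  induction π generalizing k m with
  | var x A =>
    obtain rfl | hx := eq_or_ne x k
    · have hk : HasDerivLE u (.tree (.node [.lin A])) m := by simpa [Env.single] using hk
      obtain ⟨π₀, hπ₀⟩ := (hasDerivLE_singleton_iff hu).mp hk
      rw [Term.subst_var_self hu, Env.removeAt_single_self]
      exact ⟨π₀, hπ₀.trans (Nat.le_add_left m 1)⟩
    · rw [Term.subst_var_of_ne u hx, Env.removeAt_single_of_ne A hx]
      exact ⟨.var _ A, Nat.le_add_right _ _⟩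
  | @lam Γ T t A π ih =>
    obtain ⟨π', hπ'⟩ := Env.removeAt_succ_cons k T Γ ▸ ih (k + 1) hk
    exact ⟨.lam π', show π'.size + 1 ≤ π.size + 1 + m by omega⟩
  | lamStar => exact ⟨.lamStar _, Nat.le_add_right _ _⟩
  | app π ρ ihπ ihρ =>
    obtain ⟨m₁, m₂, hm, h₁, h₂⟩ := (hasDerivLE_cat_iff hu).mp hk
    obtain ⟨π', hπ'⟩ := ihπ k h₁
    obtain ⟨ρ', hρ'⟩ := ihρ k h₂
    exact ⟨.app π' ρ', show π'.size + ρ'.size + 1 ≤ π.size + ρ.size + 1 + m by omega⟩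
  | many n Γs Gs prems ih =>
    obtain ⟨ms, hms, h⟩ := (hasDerivLE_unionF_iff hu Γs k).mp ((hasDerivLE_wrap_iff hu).mp hk)
    choose prems' hprems' using fun i => ih i k (h i)
    rw [Env.removeAt_wrap, Env.removeAt_unionF]
    refine ⟨.many n _ Gs prems', ?_⟩
    calc ∑ i, (prems' i).size ≤ ∑ i, ((prems i).size + ms i) :=
          Finset.sum_le_sum fun i _ => hprems' i
      _ ≤ ∑ i, (prems i).size + m := by rw [Finset.sum_add_distrib]; omega
  | none => exact ⟨.none _, Nat.zero_le _⟩

theorem Deriv.size_cast {Γ Γ' : Env} {t : Term} {G : GenTy} (h : Γ = Γ') (π : Deriv Γ t G) :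
    (h ▸ π : Deriv Γ' t G).size = π.size := by
  subst h
  rfl

theorem Deriv.exists_size_lt_of_whr {t t' : Term} (h : Whr t t') (ht : t.Closed) {Γ : Env}
    {A : LinTy} (π : Deriv Γ t (.lin A)) : ∃ π' : Deriv Γ t' (.lin A), π'.size < π.size := by
  induction h generalizing Γ A with
  | beta s v =>
    cases π with
    | app π₁ ρ =>
      cases π₁ with
      | lam π₀ =>
        obtain rfl := ρ.env_eq_empty ht.2
        obtain ⟨π', hπ'⟩ := Env.removeAt_zero_cons _ _ ▸ π₀.subst ht.2 0 (ρ.hasDerivLE ht.2)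
        unfold Term.subst0
        refine ⟨(Env.union_empty _).symm ▸ π', ?_⟩
        rw [Deriv.size_cast]
        exact show π'.size < π₀.size + 1 + ρ.size + 1 by omega
  | appL v _ ih =>
    cases π with
    | app π₁ ρ =>
      obtain ⟨π₁', hπ₁'⟩ := ih ht.1 π₁
      exact ⟨.app π₁' ρ, show π₁'.size + ρ.size + 1 < π₁.size + ρ.size + 1 by omega⟩

theorem Deriv.exists_whN_lam {Γ : Env} {t : Term} {A : LinTy} (π : Deriv Γ t (.lin A))
    (ht : t.Closed) : ∃ n s, WhN n t (.lam s) := by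
  obtain ⟨s, rfl⟩ | ⟨t', h⟩ := ht.lam_or_whr
  · exact ⟨0, s, .refl _⟩
  · obtain ⟨π', hπ'⟩ := π.exists_size_lt_of_whr h ht
    obtain ⟨n, s, hn⟩ := π'.exists_whN_lam (ht.whr h)
    exact ⟨n + 1, s, .step h hn⟩
termination_by π.size

section AntiSubst

variable {u : Term}

theorem Deriv.antiSubst_var (hu : u.Closed) {Γ : Env} {w : Term} {A : LinTy}
    (π : Deriv Γ w (.lin A)) {n k : ℕ} (hw : w = Term.subst u k (.var n)) :
    ∃ Γ', Γ'.removeAt k = Γ ∧ Nonempty (Deriv Γ' (.var n) (.lin A)) ∧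
      ∃ m, HasDerivLE u (.tree (Γ' k)) m := by
  obtain rfl | hn := eq_or_ne n k
  · rw [Term.subst_var_self hu] at hw
    subst hw
    obtain rfl := π.env_eq_empty hu
    refine ⟨Env.single n A, Env.removeAt_single_self n A, ⟨.var n A⟩, π.size, ?_⟩
    simpa [Env.single] using (hasDerivLE_singleton_iff hu).mpr ⟨π, le_rfl⟩
  · rw [Term.subst_var_of_ne u hn] at hw
    subst hw
    cases π
    refine ⟨Env.single n A, Env.removeAt_single_of_ne A hn, ⟨.var n A⟩, 0, ?_⟩
    simpa [Env.single, hn.symm] using hasDerivLE_nil u 0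

theorem Deriv.antiSubst (hu : u.Closed) {Γ : Env} {w : Term} {G : GenTy} (π : Deriv Γ w G)
    {s : Term} {k : ℕ} (hw : w = Term.subst u k s) :
    ∃ Γ', Γ'.removeAt k = Γ ∧ Nonempty (Deriv Γ' s G) ∧ ∃ m, HasDerivLE u (.tree (Γ' k)) m := by
  induction π generalizing s k with
  | var x A =>
    rcases s with n | s | ⟨s₁, s₂⟩
    · exact (Deriv.var x A).antiSubst_var hu hw
    all_goals cases hw
  | lam π ih =>
    rcases s with n | s | ⟨s₁, s₂⟩
    · exact (Deriv.lam π).antiSubst_var hu hw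
    · obtain ⟨Γ', hΓ', ⟨ν⟩, m, hm⟩ := ih (Term.lam.inj hw)
      obtain ⟨T, Δ, rfl⟩ := Γ'.exists_eq_cons
      obtain ⟨rfl, rfl⟩ := Env.cons_inj.mp (Env.removeAt_succ_cons k T Δ ▸ hΓ')
      exact ⟨Δ, rfl, ⟨.lam ν⟩, m, hm⟩
    · cases hw
  | lamStar t =>
    rcases s with n | s | ⟨s₁, s₂⟩
    · exact (Deriv.lamStar t).antiSubst_var hu hw
    · exact ⟨Env.empty, rfl, ⟨.lamStar s⟩, 0, hasDerivLE_nil u 0⟩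
    · cases hw
  | app π ρ ihπ ihρ =>
    rcases s with n | s | ⟨s₁, s₂⟩
    · exact (Deriv.app π ρ).antiSubst_var hu hw
    · cases hw
    · obtain ⟨h₁, h₂⟩ := Term.app.inj hw
      obtain ⟨Γ₁, rfl, ⟨ν₁⟩, m₁, hm₁⟩ := ihπ h₁
      obtain ⟨Γ₂, rfl, ⟨ν₂⟩, m₂, hm₂⟩ := ihρ h₂
      exact ⟨Env.union Γ₁ Γ₂, rfl, ⟨.app ν₁ ν₂⟩, m₁ + m₂,
        (hasDerivLE_cat_iff hu).mpr ⟨m₁, m₂, le_rfl, hm₁, hm₂⟩⟩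
  | many n Γs Gs prems ih =>
    choose Γ' hΓ' ν m hm using fun i => ih i hw
    refine ⟨Env.wrap (Env.unionF Γ'), ?_, ⟨.many n Γ' Gs fun i => (ν i).some⟩, ∑ i, m i,
      (hasDerivLE_wrap_iff hu).mpr ((hasDerivLE_unionF_iff hu Γ' k).mpr ⟨m, le_rfl, hm⟩)⟩
    rw [Env.removeAt_wrap, Env.removeAt_unionF]
    simp only [hΓ']
  | none => exact ⟨Env.empty, rfl, ⟨.none s⟩, 0, hasDerivLE_nil u 0⟩

end AntiSubst

theorem Deriv.nonempty_of_whr {t t' : Term} (h : Whr t t') (ht : t.Closed) {Γ : Env} {A : LinTy}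
    (π : Deriv Γ t' (.lin A)) : Nonempty (Deriv Γ t (.lin A)) := by
  induction h generalizing Γ A with
  | beta s v =>
    obtain ⟨Γ', rfl, ⟨ν⟩, -, μ, -⟩ := π.antiSubst ht.2 rfl
    obtain ⟨T, Δ, rfl⟩ := Γ'.exists_eq_cons
    rw [Env.removeAt_zero_cons, ← Env.union_empty Δ]
    exact ⟨.app (.lam ν) μ⟩
  | appL v _ ih =>
    cases π with
    | app π₁ ρ => exact (ih ht.1 π₁).map (.app · ρ)

theorem WhN.nonempty_deriv_star {n : ℕ} {t s : Term} (h : WhN n t (.lam s)) (ht : t.Closed) :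
    Nonempty (Deriv Env.empty t (.lin .star)) := by
  generalize hv : Term.lam s = v at h
  induction h with
  | refl => exact hv ▸ ⟨.lamStar s⟩
  | step h _ ih => exact (ih (ht.whr h) hv).elim (·.nonempty_of_whr h ht)

/-- characterization of termination. A closed λ-term is weak-head
normalizing (reduces in finitely many steps to an abstraction) iff `⊢ t : ⋆` is
derivable in the tree type system. -/
theorem termination_characterization {t : Term} (hc : t.Closed) :
    (∃ (n : ℕ) (s : Term), WhN n t (.lam s)) ↔
    Nonempty (Deriv Env.empty t (.lin .star)) :=
  ⟨fun ⟨_, _, h⟩ => h.nonempty_deriv_star hc, fun ⟨π⟩ => π.exists_whN_lam hc⟩
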